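/- For n \ge 9, let \xi(m) = (n+1)m - ex_{Q_{n,2}}(m) as given by the closed formulas, and define \lambda(h) = \min\{\xi(m) : h \le m \le 2^{n-1}\}. Then for every h with \lceil 11 \cdot 2^{n-1}/48 \rceil \le h \le 2^{n-1}, \lambda(h) = 2^{n-1}. -/

import Mathlib

/-- Closed-form hypercube edge-isoperimetric function: for `m` with binary expansion
`m = 2^{t_0} + ... + 2^{t_s}` with `t_0 > ... > t_s`, this equals
`∑ t_i 2^{t_i} + ∑ 2 i 2^{t_i}`. -/
def ex : ℕ → ℕ
  | 0 => 0
  | (m+1) =>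
      Nat.log2 (m+1) * 2 ^ Nat.log2 (m+1) + 2 * ((m+1) - 2 ^ Nat.log2 (m+1))
        + ex ((m+1) - 2 ^ Nat.log2 (m+1))
decreasing_by
  exact Nat.sub_lt (Nat.succ_pos m) (Nat.two_pow_pos _)

/-- Closed formula for `ex_m(Q_{n,2})`, valid for `1 ≤ m ≤ 2^{n-1}`:
`ex m` for `m ≤ 2^{n-2}`, and `ex m + 2m - 2^{n-1}` for `2^{n-2} < m ≤ 2^{n-1}`. -/
def exQ (n m : ℕ) : ℤ :=
  if m ≤ 2 ^ (n-2) then (ex m : ℤ) else (ex m : ℤ) + 2 * m - 2 ^ (n-1)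

/-- `ξ_m(Q_{n,2}) = (n+1) m - ex_m(Q_{n,2})`. -/
def xi (n m : ℕ) : ℤ := ((n : ℤ) + 1) * m - exQ n m

/-! For `r ≤ 2^k`, `k * r - ex r` is the least edge boundary of an `r`-vertex set in `Q_k`, so the
theorem is an edge-isoperimetric estimate. Writing `m = 2^l + r` with `r ≤ 2^l`, the identity
`ex m = l * 2^l + 2 * r + ex r` turns a bound `ex r + c * 2^l ≤ (l + d) * r` into
`ex m + (c + d + 2) * 2^l ≤ (l + d + 2) * m`. Iterating this from the trivial `ex r ≤ l * r`, each time
on the range of `m` where the bound for `r` is available, yields `ex m + 2^(k+1) ≤ (k + 3) * m` for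
`11 * 2^k ≤ 24 * m ≤ 24 * 2^k`, which is `ξ(m) ≥ 2^(n-1)` for `m ≤ 2^(n-2)`; above `2^(n-2)` the
trivial bound suffices, and `m = 2^(n-1)` attains the minimum. -/

lemma ex_zero : ex 0 = 0 := by
  rw [ex]

lemma ex_two_pow_add_of_lt {t r : ℕ} (hr : r < 2 ^ t) :
    ex (2 ^ t + r) = t * 2 ^ t + 2 * r + ex r := by
  have hlog : Nat.log2 (2 ^ t + r) = t := by
    refine (Nat.log2_eq_iff (by positivity)).2 ⟨by omega, by rw [pow_succ]; omega⟩
  obtain ⟨s, hs⟩ : ∃ s, 2 ^ t + r = s + 1 := ⟨2 ^ t + r - 1, by have := Nat.two_pow_pos t; omega⟩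
  rw [hs, ex, ← hs, hlog, Nat.add_sub_cancel_left]

lemma ex_two_pow (t : ℕ) : ex (2 ^ t) = t * 2 ^ t := by
  simpa [ex_zero] using ex_two_pow_add_of_lt (Nat.two_pow_pos t)

lemma ex_one : ex 1 = 0 := by
  simpa using ex_two_pow 0

lemma ex_two_pow_add {t r : ℕ} (hr : r ≤ 2 ^ t) :
    ex (2 ^ t + r) = t * 2 ^ t + 2 * r + ex r := by
  rcases hr.lt_or_eq with hr | rfl
  · exact ex_two_pow_add_of_lt hr
  · rw [← two_mul, ← pow_succ', ex_two_pow, ex_two_pow, pow_succ']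
    ring

lemma ex_two_pow_add_add_le {l r c d : ℕ} (hr : r ≤ 2 ^ l)
    (h : ex r + c * 2 ^ l ≤ (l + d) * r) :
    ex (2 ^ l + r) + (c + d + 2) * 2 ^ l ≤ (l + d + 2) * (2 ^ l + r) := by
  rw [ex_two_pow_add hr]
  nlinarith

lemma ex_le_mul (k : ℕ) {r : ℕ} (hr : r ≤ 2 ^ k) : ex r ≤ k * r := by
  induction k generalizing r with
  | zero =>
    interval_cases r
    · simp [ex_zero]
    · simp [ex_one]
  | succ l ih =>
    by_cases hlow : r ≤ 2 ^ l
    · exact (ih hlow).trans (Nat.mul_le_mul_right r l.le_succ)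
    obtain ⟨s, rfl⟩ := Nat.exists_eq_add_of_le (not_le.1 hlow).le
    have hs : s ≤ 2 ^ l := by rw [pow_succ] at hr; omega
    rw [ex_two_pow_add hs]
    nlinarith [ih hs]

lemma ex_add_two_pow_le : ∀ (i : ℕ) {r : ℕ}, r ≤ 2 ^ i → 2 ^ i ≤ 3 * r →
    ex r + 2 ^ i ≤ (i + 1) * r
  | 0, r, hr, h3 => by
    obtain rfl : r = 1 := by rw [pow_zero] at hr; omega
    simp [ex_one]
  | j + 1, r, hr, h3 => by
    by_cases htop : 2 ^ j ≤ r
    · obtain ⟨s, rfl⟩ := Nat.exists_eq_add_of_le htop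
      have hs : s ≤ 2 ^ j := by rw [pow_succ] at hr; omega
      have := ex_two_pow_add_add_le (c := 0) (d := 0) hs (by simpa using ex_le_mul j hs)
      rw [pow_succ]
      linarith
    · obtain _ | l := j
      · simp only [pow_zero, zero_add, pow_one] at htop h3; omega
      have hmid : 2 ^ l ≤ r := by rw [pow_succ, pow_succ] at h3; omega
      obtain ⟨s, rfl⟩ := Nat.exists_eq_add_of_le hmid
      have hs : s ≤ 2 ^ l := by rw [pow_succ] at htop; omega
      have h3s : 2 ^ l ≤ 3 * s := by rw [pow_succ, pow_succ] at h3; omega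
      have := ex_two_pow_add_add_le (c := 1) (d := 1) hs (by simpa using ex_add_two_pow_le l hs h3s)
      rw [pow_succ, pow_succ]
      linarith

lemma ex_add_three_mul_two_pow_le (k : ℕ) {r : ℕ} (hr : r ≤ 2 ^ k) (h6 : 5 * 2 ^ k ≤ 6 * r) :
    ex r + 3 * 2 ^ k ≤ (k + 3) * r := by
  obtain _ | j := k
  · obtain rfl : r = 1 := by rw [pow_zero] at hr; omega
    simp [ex_one]
  rw [pow_succ] at hr h6
  obtain ⟨s, rfl⟩ := Nat.exists_eq_add_of_le (show 2 ^ j ≤ r by omega)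
  have hs : s ≤ 2 ^ j := by omega
  have hD := ex_add_two_pow_le (j + 1) (hs.trans (by rw [pow_succ]; omega)) (by rw [pow_succ]; omega)
  have := ex_two_pow_add_add_le (c := 2) (d := 2) hs (by rw [pow_succ] at hD; linarith)
  rw [pow_succ]
  linarith

lemma ex_add_two_pow_succ_le (k : ℕ) {m : ℕ} (hm : m ≤ 2 ^ k) (h24 : 11 * 2 ^ k ≤ 24 * m) :
    ex m + 2 ^ (k + 1) ≤ (k + 3) * m := by
  obtain _ | j := k
  · obtain rfl : m = 1 := by rw [pow_zero] at hm; omega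
    simp [ex_one]
  by_cases htop : 2 ^ j ≤ m
  · have := ex_add_two_pow_le (j + 1) hm (by rw [pow_succ]; omega)
    simp only [pow_succ] at this ⊢
    linarith
  obtain _ | l := j
  · simp only [pow_zero, zero_add, pow_one] at htop h24; omega
  have hmid : 2 ^ l ≤ m := by rw [pow_succ, pow_succ] at h24; omega
  obtain ⟨s, rfl⟩ := Nat.exists_eq_add_of_le hmid
  have hs : s ≤ 2 ^ l := by rw [pow_succ] at htop; omega
  have h6 : 5 * 2 ^ l ≤ 6 * s := by rw [pow_succ, pow_succ] at h24; omega
  have := ex_two_pow_add_add_le (c := 3) (d := 3) hs (ex_add_three_mul_two_pow_le l hs h6)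
  rw [pow_succ, pow_succ, pow_succ]
  linarith

/-- Main Theorem 1(a): for `n ≥ 9` and every `h` with
`⌈11·2^{n-1}/48⌉ ≤ h ≤ 2^{n-1}`, the `h`-extra edge-connectivity
`λ_h(Q_{n,2}) = min {ξ(m) : h ≤ m ≤ 2^{n-1}}` equals `2^{n-1}`. -/
theorem lambda_concentration (n h : ℕ) (hn : 9 ≤ n)
    (h1 : (⌈(11 * 2 ^ (n-1) : ℚ) / 48⌉ : ℤ) ≤ (h : ℤ)) (h2 : h ≤ 2 ^ (n-1)) :
    IsLeast {x : ℤ | ∃ m : ℕ, h ≤ m ∧ m ≤ 2 ^ (n-1) ∧ x = xi n m} (2 ^ (n-1)) := by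
  obtain ⟨k, rfl⟩ : ∃ k, n = k + 2 := ⟨n - 2, by omega⟩
  simp only [xi, exQ, show k + 2 - 1 = k + 1 by omega, Nat.add_sub_cancel] at h1 h2 ⊢
  have hh : 11 * 2 ^ k ≤ 24 * h := by
    have := Int.ceil_le.1 h1
    rw [div_le_iff₀ (by norm_num), pow_succ] at this
    exact_mod_cast (by push_cast at this; linarith : (11 * 2 ^ k : ℚ) ≤ 24 * h)
  refine ⟨⟨2 ^ (k + 1), h2, le_rfl, ?_⟩, ?_⟩
  · have : ¬ 2 ^ (k + 1) ≤ 2 ^ k := by rw [pow_succ]; have := Nat.two_pow_pos k; omega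
    rw [if_neg this, ex_two_pow]
    push_cast
    ring
  rintro _ ⟨m, hhm, hm, rfl⟩
  split_ifs with hlow
  · have := ex_add_two_pow_succ_le k hlow (by omega)
    zify at this
    push_cast
    linarith
  · have := ex_le_mul (k + 1) hm
    zify at this
    push_cast
    linarith
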